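/- Let F → X → Y be a homotopy fibration with connecting map ∂ : ΩY → F, where F is an H-space. Suppose α : A → ΩY and β : B → ΩY are maps such that μ ∘ (α × β) : A × B → ΩY is a homotopy equivalence (μ being loop multiplication) and ∂ ∘ β is nullhomotopic. Then ∂ is nullhomotopic if and only if ∂ ∘ α is nullhomotopic; more precisely, ∂ is homotopic to ∂ ∘ α ∘ pr₁ ∘ e⁻¹ where e = μ ∘ (α × β), so the orders of ∂ and ∂ ∘ α as homotopy classes coincide. -/

import Mathlib

open ContinuousMap

theorem connecting_map_factors_through_alpha
    (L F A B : Type) [TopologicalSpace L] [TopologicalSpace F] [TopologicalSpace A]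
    [TopologicalSpace B]
    (μ : C(L × L, L)) (d : C(L, F)) (θ : C(L × F, F)) (α : C(A, L)) (β : C(B, L))
    (e : HomotopyEquiv (A × B) L)
    -- `e` is the homotopy equivalence `μ ∘ (α × β)`
    (he : e.toFun = μ.comp (α.prodMap β))
    -- compatibility of the canonical action `θ` with the connecting map: `∂∘μ ≃ θ∘(id×∂)`
    (hθ : (d.comp μ).Homotopic (θ.comp ((ContinuousMap.id L).prodMap d)))
    (f₀ : F)
    -- `∂ ∘ β` is nullhomotopic (with constant `f₀`)
    (hβ : (d.comp β).Homotopic (ContinuousMap.const B f₀))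
    -- unit property of the action: `∂ ≃ θ(·, f₀)`
    (hunit : d.Homotopic (θ.comp ((ContinuousMap.id L).prodMk
      (ContinuousMap.const L f₀)))) :
    d.Homotopic ((d.comp α).comp ((ContinuousMap.fst).comp e.invFun)) ∧
      ((∃ c : F, d.Homotopic (ContinuousMap.const L c)) ↔
        ∃ c : F, (d.comp α).Homotopic (ContinuousMap.const A c)) := by
  have key : d.Homotopic ((d.comp α).comp ((ContinuousMap.fst).comp e.invFun)) := by
    have h1 : d.Homotopic ((d.comp e.toFun).comp e.invFun) := by
      have h := e.right_inv
      have := Homotopic.comp (Homotopic.refl d) h.symm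
      simpa [ContinuousMap.comp_assoc] using this
    -- d ∘ e ≃ (d ∘ α) ∘ fst
    have h2 : (d.comp e.toFun).Homotopic ((d.comp α).comp (ContinuousMap.fst : C(A × B, A))) := by
      rw [he]
      have hEq : ∀ {f g : C(A × B, F)}, f = g → f.Homotopic g := fun h => h ▸ Homotopic.refl _
      have step0 : d.comp (μ.comp (α.prodMap β)) = (d.comp μ).comp (α.prodMap β) := by
        ext x; rfl
      have step1 : ((d.comp μ).comp (α.prodMap β)).Homotopic
          ((θ.comp ((ContinuousMap.id L).prodMap d)).comp (α.prodMap β)) :=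
        hθ.comp (Homotopic.refl (α.prodMap β))
      have eq1 : (θ.comp ((ContinuousMap.id L).prodMap d)).comp (α.prodMap β)
          = θ.comp (α.prodMap (d.comp β)) := by ext x; rfl
      have step2 : (θ.comp (α.prodMap (d.comp β))).Homotopic
          (θ.comp (α.prodMap (ContinuousMap.const B f₀))) :=
        (Homotopic.refl θ).comp ((Homotopic.refl α).prodMap hβ)
      have eq2 : θ.comp (α.prodMap (ContinuousMap.const B f₀))
          = (θ.comp ((ContinuousMap.id L).prodMk (ContinuousMap.const L f₀))).comp
              (α.comp (ContinuousMap.fst : C(A × B, A))) := by ext x; rfl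
      have step3 : ((θ.comp ((ContinuousMap.id L).prodMk
            (ContinuousMap.const L f₀))).comp (α.comp (ContinuousMap.fst : C(A × B, A)))).Homotopic
          (d.comp (α.comp (ContinuousMap.fst : C(A × B, A)))) :=
        hunit.symm.comp (Homotopic.refl (α.comp (ContinuousMap.fst : C(A × B, A))))
      have eq3 : d.comp (α.comp (ContinuousMap.fst : C(A × B, A)))
          = (d.comp α).comp (ContinuousMap.fst : C(A × B, A)) := by ext x; rfl
      exact (hEq step0).trans <| step1.trans <| (hEq eq1).trans <| step2.trans <|
        (hEq eq2).trans <| step3.trans (hEq eq3)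
    have eq5 : ((d.comp α).comp ContinuousMap.fst).comp e.invFun
        = (d.comp α).comp ((ContinuousMap.fst).comp e.invFun) := by ext x; rfl
    exact h1.trans (eq5 ▸ (h2.comp (Homotopic.refl e.invFun)))
  refine ⟨key, ?_, ?_⟩
  · rintro ⟨c, hc⟩
    exact ⟨c, by simpa using hc.comp (Homotopic.refl α)⟩
  · rintro ⟨c, hc⟩
    refine ⟨c, key.trans ?_⟩
    have := hc.comp (Homotopic.refl ((ContinuousMap.fst : C(A × B, A)).comp e.invFun))
    simpa using this
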